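/- If δ is a σ-derivation of R with δ(R) ⊆ I and δ(I) ⊆ I² for a σ-stable two-sided ideal I with σ(I) = I, then δ is σ-nilpotent: for every n ≥ 1 there exists m ≥ 1 such that M(δ, σ)(R) ⊆ I^n for every noncommutative monomial M in δ and σ containing at least m factors δ. -/

import Mathlib

/-!
Since `σ(I) ⊆ I`, the endomorphism `σ` preserves every power `Iᵏ`, and the twisted Leibniz rule
`δ(xy) = σ(x) δ(y) + δ(x) y` lifts `δ(R) ⊆ I`, `δ(I) ⊆ I²` to `δ(Iᵏ) ⊆ Iᵏ⁺¹` for all `k`.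
Hence a monomial with `k` factors `δ` maps `R` into `Iᵏ`, and the powers of `I` decrease.
-/

universe u

/-- The monomial in `δ` and `σ` determined by a list of booleans
(`true` stands for a factor `δ`, `false` for a factor `σ`). -/
def monomialMap {R : Type u} (σ δ : R → R) (l : List Bool) : R → R :=
  (l.map fun b => if b then δ else σ).foldr (· ∘ ·) id

namespace Ideal

variable {R : Type u} [Semiring R] {I : Ideal R}

theorem pow_le_comap_pow_of_le_comap (σ : R →+* R) (hσ : I ≤ I.comap σ) (k : ℕ) :
    I ^ k ≤ (I ^ k).comap σ := by
  induction k with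
  | zero => simp [Submodule.pow_zero, one_eq_top]
  | succ k ih =>
    rw [Submodule.pow_succ, mul_le]
    intro x hx y hy
    rw [mem_comap, map_mul]
    exact mul_mem_mul (ih hx) (hσ hy)

theorem map_mem_pow_succ_of_mem_pow (σ : R →+* R) (δ : R →+ R)
    (hδ : ∀ a b : R, δ (a * b) = σ a * δ b + δ a * b) (hσ : I ≤ I.comap σ)
    (hδR : ∀ r : R, δ r ∈ I) (hδI : ∀ a ∈ I, δ a ∈ I ^ 2) :
    ∀ (k : ℕ) (a : R), a ∈ I ^ k → δ a ∈ I ^ (k + 1) := by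
  intro k
  induction k with
  | zero => simpa [Submodule.pow_one] using fun a _ => hδR a
  | succ k ih =>
    intro a ha
    rw [Submodule.pow_succ] at ha
    refine Submodule.mul_induction_on ha (fun x hx y hy => ?_) (fun x y hx hy => ?_)
    · rw [hδ]
      refine add_mem ?_ (mul_mem_mul (ih x hx) hy)
      rw [show k + 1 + 1 = k + 2 from rfl, Submodule.pow_add _ two_ne_zero]
      exact mul_mem_mul (pow_le_comap_pow_of_le_comap σ hσ k hx) (hδI y hy)
    · rw [map_add]
      exact add_mem hx hy

end Ideal

theorem monomialMap_cons {R : Type u} (σ δ : R → R) (b : Bool) (l : List Bool) :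
    monomialMap σ δ (b :: l) = (if b then δ else σ) ∘ monomialMap σ δ l :=
  rfl

theorem monomialMap_mem_pow_count {R : Type u} [Semiring R] {I : Ideal R} {σ δ : R → R}
    (hσ : ∀ k, ∀ a ∈ I ^ k, σ a ∈ I ^ k) (hδ : ∀ k, ∀ a ∈ I ^ k, δ a ∈ I ^ (k + 1))
    (l : List Bool) (r : R) : monomialMap σ δ l r ∈ I ^ l.count true := by
  induction l with
  | nil => simp [monomialMap, Submodule.pow_zero, Ideal.one_eq_top]
  | cons b l ih =>
    cases b
    · simpa [monomialMap_cons] using hσ _ _ ih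
    · simpa [monomialMap_cons] using hδ _ _ ih

theorem sigma_derivation_is_sigma_nilpotent_general (R : Type u) [Ring R] (σ : R →+* R) (δ : R →+ R)
    (hδ : ∀ a b : R, δ (a * b) = σ a * δ b + δ a * b)
    (I : Ideal R)
    (hσI : σ '' (I : Set R) = (I : Set R))
    (hδR : ∀ r : R, δ r ∈ I)
    (hδI : ∀ a : R, a ∈ I → δ a ∈ I ^ 2) :
    ∀ n : ℕ, 1 ≤ n → ∃ m : ℕ, 1 ≤ m ∧
      ∀ l : List Bool, m ≤ l.count true →
        ∀ r : R, monomialMap (σ : R → R) (δ : R → R) l r ∈ I ^ n := by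
  have hσ : I ≤ I.comap σ := fun a ha => hσI.subset ⟨a, ha, rfl⟩
  have hσpow := Ideal.pow_le_comap_pow_of_le_comap σ hσ
  have hδpow := Ideal.map_mem_pow_succ_of_mem_pow σ δ hδ hσ hδR hδI
  intro n hn
  exact ⟨n, hn, fun l hl r =>
    Ideal.pow_le_pow_right hl (monomialMap_mem_pow_count (fun k a ha => hσpow k ha) hδpow l r)⟩

/-- if `δ(R) ⊆ I` and `δ(I) ⊆ I²` for a two-sided ideal `I` with
`σ(I) = I`, then `δ` is `σ`-nilpotent: for every `n ≥ 1` there is `m ≥ 1` such that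
every noncommutative monomial in `δ, σ` with at least `m` factors `δ` maps `R` into `Iⁿ`. -/
theorem sigma_derivation_is_sigma_nilpotent (R : Type u) [Ring R] (σ : R →+* R) (δ : R →+ R)
    (hδ : ∀ a b : R, δ (a * b) = σ a * δ b + δ a * b)
    (I : Ideal R) (hIright : ∀ a b : R, a ∈ I → a * b ∈ I)
    (hσI : σ '' (I : Set R) = (I : Set R))
    (hδR : ∀ r : R, δ r ∈ I)
    (hδI : ∀ a : R, a ∈ I → δ a ∈ I ^ 2) :
    ∀ n : ℕ, 1 ≤ n → ∃ m : ℕ, 1 ≤ m ∧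
      ∀ l : List Bool, m ≤ l.count true →
        ∀ r : R, monomialMap (σ : R → R) (δ : R → R) l r ∈ I ^ n :=
  sigma_derivation_is_sigma_nilpotent_general R σ δ hδ I hσI hδR hδI
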